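/- arXiv:1908.05589 — 5 statements merged into one kernel-verified Lean document; each statement's English description precedes it below -/
import Mathlib

section
/- Let P : ℝ → ℝ be a polynomial of degree m, let I ⊂ ℝ be a bounded interval of positive length, and let t ∈ ℝ. Then |P(t)| ≤ (8 m · max{|I|, dist(t, I)} / |I|)^m · (1/|I|) · ∫_I |P(t')| dt'. -/
/-!
Cut `[a, b]` into `3m + 1` equal pieces of length `w` and, in every third piece, pick a point
where `|P|` is at most its mean over that piece. These `m + 1` nodes are `2w`-separated and lie
within `2 · max (b - a) (dist t I)` of `t`, so Lagrange interpolation at them bounds `|P t|` by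
`((3m + 1) R / (b - a))^m (3m + 1) / m!` times the mean of `|P|` with `R = 2 · max …`; this beats
`(8m · max … / (b - a))^m` as soon as `m ≥ 3` (and trivially for `m = 0`). For `m = 1, 2` the
Taylor coefficients of `P` at the midpoint are instead read off from the integrals of `P` over
the halves, resp. thirds, of `[a, b]`.
-/

open MeasureTheory Polynomial Finset
open scoped Nat

theorem abs_eval_le_sum_abs_eval_mul_prod {ι : Type*} [DecidableEq ι] {s : Finset ι}
    {v : ι → ℝ} (hv : Set.InjOn v s) {P : ℝ[X]} (hP : P.degree < s.card) (t : ℝ) :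
    |P.eval t| ≤ ∑ i ∈ s, |P.eval (v i)| * ∏ j ∈ s.erase i, |t - v j| / |v i - v j| := by
  conv_lhs => rw [Lagrange.eq_interpolate hv hP, Lagrange.interpolate_apply, eval_finsetSum]
  refine (abs_sum_le_sum_abs _ _).trans (sum_le_sum fun i _ => ?_)
  simp only [Lagrange.basis, Lagrange.basisDivisor, eval_mul, eval_C, eval_prod, eval_sub, eval_X,
    abs_mul, abs_prod, abs_inv, div_eq_inv_mul, le_refl]

theorem prod_erase_range_abs_sub {m j : ℕ} (hj : j ≤ m) :
    ∏ k ∈ (range (m + 1)).erase j, |(j : ℝ) - k| = j ! * (m - j)! := by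
  induction m, hj using Nat.le_induction with
  | base =>
    rw [range_add_one, erase_insert notMem_range_self, Nat.sub_self, Nat.factorial_zero,
      Nat.cast_one, mul_one, ← Nat.descFactorial_self, Nat.descFactorial_eq_prod_range,
      Nat.cast_prod]
    refine prod_congr rfl fun k hk => ?_
    have hkj : k ≤ j := (mem_range.1 hk).le
    rw [Nat.cast_sub hkj, abs_of_nonneg (sub_nonneg.2 (by exact_mod_cast hkj))]
  | succ m hjm ih =>
    have hjm' : (j : ℝ) ≤ m := by exact_mod_cast hjm
    rw [range_add_one, erase_insert_of_ne (by omega), prod_insert (by simp), ih,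
      Nat.succ_sub hjm, Nat.factorial_succ, abs_sub_comm, abs_of_nonneg (by push_cast; linarith)]
    push_cast [Nat.cast_sub hjm]
    ring

theorem inv_factorial_mul_factorial_le {m j : ℕ} (hj : j ≤ m) :
    ((j ! * (m - j)! : ℕ) : ℝ)⁻¹ ≤ 2 ^ m / m ! := by
  have hchoose : (m.choose j : ℝ) ≤ 2 ^ m := by exact_mod_cast Nat.choose_le_two_pow m j
  rw [inv_eq_one_div, div_le_div_iff₀ (by positivity) (by positivity), one_mul,
    ← Nat.choose_mul_factorial_mul_factorial hj]
  push_cast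
  rw [mul_assoc]
  gcongr

theorem abs_eval_le_of_separated_nodes {m : ℕ} {P : ℝ[X]} (hP : P.natDegree ≤ m) {x : ℕ → ℝ}
    {δ R t : ℝ} (hδ : 0 < δ) (hsep : ∀ j ≤ m, ∀ k ≤ m, δ * |(j : ℝ) - k| ≤ |x j - x k|)
    (hR : ∀ k ≤ m, |t - x k| ≤ R) :
    |P.eval t| ≤ (2 * R / δ) ^ m / m ! * ∑ j ∈ range (m + 1), |P.eval (x j)| := by
  have hR0 : 0 ≤ R := (abs_nonneg _).trans (hR 0 m.zero_le)
  have hinj : Set.InjOn x (range (m + 1)) := by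
    intro j hj k hk hjk
    by_contra hne
    have hpos : 0 < |(j : ℝ) - k| := abs_pos.2 (sub_ne_zero.2 (by exact_mod_cast hne))
    have := hsep j (Nat.lt_succ_iff.1 (mem_range.1 hj)) k (Nat.lt_succ_iff.1 (mem_range.1 hk))
    rw [hjk, sub_self, abs_zero] at this
    exact (mul_pos hδ hpos).not_ge this
  have hdeg : P.degree < (range (m + 1)).card := by
    rw [card_range]
    exact degree_le_natDegree.trans_lt (by exact_mod_cast Nat.lt_succ_of_le hP)
  have hprod : ∀ j ∈ range (m + 1),
      ∏ k ∈ (range (m + 1)).erase j, |t - x k| / |x j - x k| ≤ (2 * R / δ) ^ m / m ! := by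
    intro j hj
    have hjm : j ≤ m := Nat.lt_succ_iff.1 (mem_range.1 hj)
    calc ∏ k ∈ (range (m + 1)).erase j, |t - x k| / |x j - x k|
        ≤ ∏ k ∈ (range (m + 1)).erase j, R / δ / |(j : ℝ) - k| := by
          refine prod_le_prod (fun _ _ => by positivity) fun k hk => ?_
          obtain ⟨hkj, hk⟩ := mem_erase.1 hk
          have hkm : k ≤ m := Nat.lt_succ_iff.1 (mem_range.1 hk)
          have : 0 < |(j : ℝ) - k| := abs_pos.2 (sub_ne_zero.2 (by exact_mod_cast hkj.symm))
          rw [div_div]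
          exact div_le_div₀ hR0 (hR k hkm) (by positivity) (hsep j hjm k hkm)
      _ = (R / δ) ^ m * ((j ! * (m - j)! : ℕ) : ℝ)⁻¹ := by
          rw [prod_div_distrib, prod_const, card_erase_of_mem hj, card_range,
            prod_erase_range_abs_sub hjm, div_eq_mul_inv]
          push_cast; rfl
      _ ≤ (R / δ) ^ m * (2 ^ m / m !) := by
          gcongr; exact inv_factorial_mul_factorial_le hjm
      _ = (2 * R / δ) ^ m / m ! := by rw [mul_div_assoc', ← mul_pow]; ring
  calc |P.eval t| ≤ ∑ j ∈ range (m + 1), |P.eval (x j)| * ((2 * R / δ) ^ m / m !) :=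
        (abs_eval_le_sum_abs_eval_mul_prod hinj hdeg t).trans
          (sum_le_sum fun j hj => mul_le_mul_of_nonneg_left (hprod j hj) (abs_nonneg _))
    _ = _ := by rw [mul_sum]; exact sum_congr rfl fun _ _ => mul_comm _ _

theorem exists_mem_Icc_mul_le_integral {f : ℝ → ℝ} (hf : Continuous f) {c d : ℝ}
    (hcd : c ≤ d) :
    ∃ x ∈ Set.Icc c d, (d - c) * f x ≤ ∫ y in c..d, f y := by
  obtain ⟨x, hx, hmin⟩ := isCompact_Icc.exists_isMinOn (Set.nonempty_Icc.2 hcd) hf.continuousOn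
  refine ⟨x, hx, ?_⟩
  simpa using intervalIntegral.integral_mono_on hcd (intervalIntegrable_const (μ := volume))
    (hf.intervalIntegrable c d) fun y hy => hmin hy

theorem mul_abs_sub_le_abs_sub_of_mem_windows {x : ℕ → ℝ} {a d w : ℝ} (hw : 0 ≤ w)
    (hwd : w ≤ d) (hx : ∀ j : ℕ, x j ∈ Set.Icc (a + j * d) (a + j * d + w)) (j k : ℕ) :
    (d - w) * |(j : ℝ) - k| ≤ |x j - x k| := by
  wlog hkj : k ≤ j generalizing j k
  · rw [abs_sub_comm, abs_sub_comm (x j)]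
    exact this k j (by omega)
  obtain rfl | hkj := hkj.eq_or_lt
  · simp
  have hkj' : (k : ℝ) + 1 ≤ j := by exact_mod_cast hkj
  have hsep : (d - w) * (j - k) ≤ x j - x k := by nlinarith [(hx j).1, (hx k).2]
  rw [abs_of_nonneg (by linarith), abs_of_nonneg (by nlinarith)]
  exact hsep

theorem sum_integral_windows_le {f : ℝ → ℝ} (hf : Continuous f) (hf0 : ∀ x, 0 ≤ f x)
    {a d w : ℝ} (hw : 0 ≤ w) (hwd : w ≤ d) (m : ℕ) :
    ∑ j ∈ range (m + 1), ∫ x in (a + j * d)..(a + j * d + w), f x ≤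
      ∫ x in a..(a + m * d + w), f x := by
  induction m with
  | zero => simp
  | succ m ih =>
    have hm : (0 : ℝ) ≤ m * d := mul_nonneg m.cast_nonneg (hw.trans hwd)
    rw [sum_range_succ, ← intervalIntegral.integral_add_adjacent_intervals
      (hf.intervalIntegrable a (a + (m + 1 : ℕ) * d)) (hf.intervalIntegrable _ _)]
    gcongr
    refine ih.trans (intervalIntegral.integral_mono_interval le_rfl (by linarith) ?_
      (.of_forall hf0) (hf.intervalIntegrable _ _))
    push_cast; linarith

theorem abs_eval_le_of_forall_abs_sub_le {m : ℕ} {P : ℝ[X]} (hP : P.natDegree ≤ m) {a b : ℝ}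
    (hab : a < b) {t R : ℝ} (hR : ∀ x ∈ Set.Icc a b, |t - x| ≤ R) :
    |P.eval t| ≤ ((3 * m + 1) * R / (b - a)) ^ m * ((3 * m + 1) / m !) *
      ((1 / (b - a)) * ∫ x in a..b, |P.eval x|) := by
  set w := (b - a) / (3 * m + 1) with hw_def
  have hw : 0 < w := by positivity
  have hb : b = a + m * (3 * w) + w := by rw [hw_def]; field_simp; ring
  have hf : Continuous fun x => |P.eval x| := P.continuous.abs
  choose x hx hxint using fun j : ℕ =>
    exists_mem_Icc_mul_le_integral hf (c := a + j * (3 * w)) (d := a + j * (3 * w) + w)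
      (by linarith)
  have hsep : ∀ j ≤ m, ∀ k ≤ m, 2 * w * |(j : ℝ) - k| ≤ |x j - x k| := fun j _ k _ => by
    simpa [← two_mul, show 3 * w - w = 2 * w by ring] using
      mul_abs_sub_le_abs_sub_of_mem_windows hw.le (by linarith) hx j k
  have hxR : ∀ k ≤ m, |t - x k| ≤ R := fun k hk => by
    have hkm : (k : ℝ) ≤ m := by exact_mod_cast hk
    have := mul_le_mul_of_nonneg_right hkm (by positivity : (0 : ℝ) ≤ 3 * w)
    refine hR _ ⟨?_, ?_⟩ <;> nlinarith [(hx k).1, (hx k).2]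
  have hsum : w * ∑ j ∈ range (m + 1), |P.eval (x j)| ≤ ∫ x in a..b, |P.eval x| := by
    rw [mul_sum, hb]
    refine (sum_le_sum fun j _ => ?_).trans (sum_integral_windows_le hf (fun _ => abs_nonneg _)
      hw.le (by linarith) m)
    simpa using hxint j
  calc |P.eval t| ≤ (2 * R / (2 * w)) ^ m / m ! * ∑ j ∈ range (m + 1), |P.eval (x j)| :=
        abs_eval_le_of_separated_nodes hP (by positivity) hsep hxR
    _ ≤ (2 * R / (2 * w)) ^ m / m ! * ((∫ x in a..b, |P.eval x|) / w) := by
        have hR0 : 0 ≤ R := (abs_nonneg _).trans (hR a ⟨le_rfl, hab.le⟩)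
        gcongr
        rwa [le_div_iff₀ hw, mul_comm]
    _ = _ := by rw [hw_def]; field_simp

theorem six_mul_add_two_pow_mul_le {m : ℕ} (hm : 3 ≤ m) :
    (6 * m + 2) ^ m * (3 * m + 1) ≤ (8 * m) ^ m * m ! := by
  have h56 : 5 ^ m * (3 * m + 1) ≤ 6 ^ m * m ! := by
    induction m, hm using Nat.le_induction with
    | base => decide
    | succ m hm ih =>
      calc 5 ^ (m + 1) * (3 * (m + 1) + 1) ≤ 10 * (5 ^ m * (3 * m + 1)) := by
            rw [pow_succ]; nlinarith [Nat.one_le_pow m 5 (by norm_num)]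
        _ ≤ 10 * (6 ^ m * m !) := by gcongr
        _ ≤ 6 ^ (m + 1) * (m + 1)! := by
            have h10 : 10 ≤ 6 * (m + 1) := by omega
            rw [pow_succ, Nat.factorial_succ]
            nlinarith [Nat.mul_le_mul_right (6 ^ m * m !) h10]
  have h65 : 6 ^ m * (6 * m + 2) ^ m ≤ 5 ^ m * (8 * m) ^ m := by
    rw [← mul_pow, ← mul_pow]; exact Nat.pow_le_pow_left (by omega) m
  refine Nat.le_of_mul_le_mul_left ?_ (by positivity : 0 < 6 ^ m * 5 ^ m)
  calc 6 ^ m * 5 ^ m * ((6 * m + 2) ^ m * (3 * m + 1))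
      = (6 ^ m * (6 * m + 2) ^ m) * (5 ^ m * (3 * m + 1)) := by ring
    _ ≤ (5 ^ m * (8 * m) ^ m) * (6 ^ m * m !) := Nat.mul_le_mul h65 h56
    _ = 6 ^ m * 5 ^ m * ((8 * m) ^ m * m !) := by ring

theorem three_mul_add_one_pow_mul_div_factorial_le {m : ℕ} (hm : 3 ≤ m) {M L : ℝ} (hM : 0 ≤ M)
    (hL : 0 < L) :
    ((3 * m + 1) * (2 * M) / L) ^ m * ((3 * m + 1) / m !) ≤ (8 * m * M / L) ^ m := by
  have key : ((6 * m + 2) ^ m * (3 * m + 1) : ℝ) ≤ (8 * m) ^ m * m ! := by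
    exact_mod_cast six_mul_add_two_pow_mul_le hm
  rw [show (3 * m + 1) * (2 * M) / L = (6 * m + 2) * (M / L) by ring,
    show 8 * m * M / L = 8 * m * (M / L) by ring, mul_pow, mul_pow, mul_div_assoc',
    div_le_iff₀ (by positivity)]
  calc (6 * m + 2 : ℝ) ^ m * (M / L) ^ m * (3 * m + 1)
      = (6 * m + 2) ^ m * (3 * m + 1) * (M / L) ^ m := by ring
    _ ≤ (8 * m) ^ m * m ! * (M / L) ^ m := by gcongr
    _ = (8 * m) ^ m * (M / L) ^ m * m ! := by ring

theorem integral_centered_quadratic (α β γ μ c d : ℝ) :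
    ∫ x in c..d, (α + β * (x - μ) + γ * (x - μ) ^ 2) =
      α * (d - c) + β * ((d - μ) ^ 2 - (c - μ) ^ 2) / 2 + γ * ((d - μ) ^ 3 - (c - μ) ^ 3) / 3 := by
  have hderiv : ∀ x ∈ Set.uIcc c d, HasDerivAt
      (fun x => α * (x - μ) + β * (x - μ) ^ 2 / 2 + γ * (x - μ) ^ 3 / 3)
      (α + β * (x - μ) + γ * (x - μ) ^ 2) x := fun x _ => by
    have h := (hasDerivAt_id' x).sub_const μ
    refine (((h.const_mul α).add ((h.pow 2).const_mul β |>.div_const 2)).add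
      ((h.pow 3).const_mul γ |>.div_const 3)).congr_deriv ?_
    push_cast
    ring
  rw [intervalIntegral.integral_eq_sub_of_hasDerivAt hderiv
    (Continuous.intervalIntegrable (by fun_prop) c d)]
  ring

theorem eval_eq_of_natDegree_le_two {P : ℝ[X]} (hP : P.natDegree ≤ 2) (x : ℝ) :
    P.eval x = P.coeff 0 + P.coeff 1 * x + P.coeff 2 * x ^ 2 := by
  rw [eval_eq_sum_range' (by omega : P.natDegree < 3)]
  simp [Finset.sum_range_succ]

theorem exists_eval_eq_taylor_of_natDegree_le_two {P : ℝ[X]} (hP : P.natDegree ≤ 2) (μ : ℝ) :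
    ∃ α β : ℝ, ∀ x, P.eval x = α + β * (x - μ) + P.coeff 2 * (x - μ) ^ 2 :=
  ⟨P.coeff 0 + P.coeff 1 * μ + P.coeff 2 * μ ^ 2, P.coeff 1 + 2 * P.coeff 2 * μ, fun x => by
    rw [eval_eq_of_natDegree_le_two hP]; ring⟩

theorem abs_integral_add_abs_integral_le {f : ℝ → ℝ} (hf : Continuous f) {a b c : ℝ}
    (hab : a ≤ b) (hbc : b ≤ c) :
    |∫ x in a..b, f x| + |∫ x in b..c, f x| ≤ ∫ x in a..c, |f x| := by
  rw [← intervalIntegral.integral_add_adjacent_intervals (hf.abs.intervalIntegrable a b)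
    (hf.abs.intervalIntegrable b c)]
  exact add_le_add (intervalIntegral.abs_integral_le_integral_abs hab)
    (intervalIntegral.abs_integral_le_integral_abs hbc)

theorem abs_eval_le_of_natDegree_le_one {P : ℝ[X]} (hP : P.natDegree ≤ 1) {a b t M : ℝ}
    (hab : a < b) (hM : b - a ≤ M) (ht : |t - (a + b) / 2| ≤ M + (b - a) / 2) :
    |P.eval t| ≤ 8 * M / (b - a) * ((1 / (b - a)) * ∫ x in a..b, |P.eval x|) := by
  obtain ⟨r, hr, rfl⟩ : ∃ r, 0 < r ∧ b = a + 2 * r := ⟨(b - a) / 2, by linarith, by ring⟩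
  obtain ⟨α, β, heval⟩ := exists_eval_eq_taylor_of_natDegree_le_two (hP.trans one_le_two) (a + r)
  rw [coeff_eq_zero_of_natDegree_lt (by omega)] at heval
  set J := ∫ x in a..(a + 2 * r), |P.eval x|
  have hI₁ : ∫ x in a..(a + r), P.eval x = r * α - r ^ 2 / 2 * β := by
    simp only [heval, integral_centered_quadratic]; ring
  have hI₂ : ∫ x in (a + r)..(a + 2 * r), P.eval x = r * α + r ^ 2 / 2 * β := by
    simp only [heval, integral_centered_quadratic]; ring
  have hJ : |r * α - r ^ 2 / 2 * β| + |r * α + r ^ 2 / 2 * β| ≤ J := by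
    simpa only [hI₁, hI₂] using abs_integral_add_abs_integral_le P.continuous
      (by linarith : a ≤ a + r) (by linarith : a + r ≤ a + 2 * r)
  have hα : 2 * r * |α| ≤ J := by
    have habs := abs_add_le (r * α - r ^ 2 / 2 * β) (r * α + r ^ 2 / 2 * β)
    rw [show r * α - r ^ 2 / 2 * β + (r * α + r ^ 2 / 2 * β) = 2 * r * α by ring, abs_mul,
      abs_of_pos (by positivity : 0 < 2 * r)] at habs
    linarith
  have hβ : r ^ 2 * |β| ≤ J := by
    have habs := abs_sub (r * α + r ^ 2 / 2 * β) (r * α - r ^ 2 / 2 * β)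
    rw [show r * α + r ^ 2 / 2 * β - (r * α - r ^ 2 / 2 * β) = r ^ 2 * β by ring, abs_mul,
      abs_of_pos (by positivity : 0 < r ^ 2)] at habs
    linarith
  have hPt : |P.eval t| ≤ |α| + |β| * |t - (a + r)| := by
    rw [heval, zero_mul, add_zero, ← abs_mul]; exact abs_add_le _ _
  have hρ : |t - (a + r)| ≤ M + r := by convert ht using 2 <;> ring
  have hJ0 : 0 ≤ J := hα.trans' (by positivity)
  rw [show 8 * M / (a + 2 * r - a) * (1 / (a + 2 * r - a) * J) = 2 * M * J / r ^ 2 by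
    field_simp; ring, le_div_iff₀ (by positivity)]
  nlinarith [mul_le_mul_of_nonneg_right hα hr.le,
    mul_le_mul_of_nonneg_right hβ (abs_nonneg (t - (a + r))), mul_le_mul_of_nonneg_left hρ hJ0,
    mul_nonneg hJ0 (by linarith : 0 ≤ M - 3 / 2 * r), mul_le_mul_of_nonneg_right hPt (sq_nonneg r)]

theorem abs_eval_le_of_natDegree_le_two {P : ℝ[X]} (hP : P.natDegree ≤ 2) {a b t M : ℝ}
    (hab : a < b) (hM : b - a ≤ M) (ht : |t - (a + b) / 2| ≤ M + (b - a) / 2) :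
    |P.eval t| ≤ (16 * M / (b - a)) ^ 2 * ((1 / (b - a)) * ∫ x in a..b, |P.eval x|) := by
  obtain ⟨h, hh, rfl⟩ : ∃ h, 0 < h ∧ b = a + 3 * h := ⟨(b - a) / 3, by linarith, by ring⟩
  obtain ⟨α, β, heval⟩ := exists_eval_eq_taylor_of_natDegree_le_two hP (a + 3 / 2 * h)
  set γ := P.coeff 2
  set U := h * α - h ^ 2 * β + 13 / 12 * h ^ 3 * γ
  set V := h * α + h ^ 3 / 12 * γ
  set W := h * α + h ^ 2 * β + 13 / 12 * h ^ 3 * γ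
  have hU : ∫ x in a..(a + h), P.eval x = U := by
    simp only [heval, integral_centered_quadratic]; ring
  have hV : ∫ x in (a + h)..(a + 2 * h), P.eval x = V := by
    simp only [heval, integral_centered_quadratic]; ring
  have hW : ∫ x in (a + 2 * h)..(a + 3 * h), P.eval x = W := by
    simp only [heval, integral_centered_quadratic]; ring
  have hJ : |U| + |V| + |W| ≤ ∫ x in a..(a + 3 * h), |P.eval x| := by
    have h₁₂ := abs_integral_add_abs_integral_le P.continuous (by linarith : a ≤ a + h)
      (by linarith : a + h ≤ a + 2 * h)
    have h₃ := intervalIntegral.abs_integral_le_integral_abs (f := fun x => P.eval x)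
      (μ := volume) (by linarith : a + 2 * h ≤ a + 3 * h)
    rw [hU, hV] at h₁₂
    rw [hW] at h₃
    rw [← intervalIntegral.integral_add_adjacent_intervals
      (P.continuous.abs.intervalIntegrable a (a + 2 * h)) (P.continuous.abs.intervalIntegrable _ _)]
    linarith
  have hγ : 2 * h ^ 3 * |γ| ≤ |U| + 2 * |V| + |W| := by
    have habs := abs_add_three U (-2 * V) W
    rw [show U + -2 * V + W = 2 * h ^ 3 * γ by simp only [U, V, W]; ring] at habs
    simp only [abs_mul, abs_neg, abs_two, abs_pow, abs_of_pos hh] at habs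
    exact habs
  have hβ : 2 * h ^ 2 * |β| ≤ |U| + |W| := by
    have habs := abs_sub W U
    rw [show W - U = 2 * h ^ 2 * β by simp only [U, W]; ring] at habs
    simp only [abs_mul, abs_two, abs_pow, abs_of_pos hh] at habs
    linarith
  have hα : h * |α| ≤ |V| + h ^ 3 / 12 * |γ| := by
    have habs := abs_sub V (h ^ 3 / 12 * γ)
    rw [show V - h ^ 3 / 12 * γ = h * α by simp only [V]; ring] at habs
    simpa only [abs_mul, abs_div, abs_pow, abs_of_pos hh, Nat.abs_ofNat] using habs
  set ρ := |t - (a + 3 / 2 * h)|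
  have hPt : |P.eval t| ≤ |α| + |β| * ρ + |γ| * ρ ^ 2 := by
    rw [heval]
    refine (abs_add_three _ _ _).trans_eq ?_
    rw [abs_mul, abs_mul, abs_pow]
  have hρ : ρ ≤ 3 / 2 * M := by
    have : ρ ≤ M + 3 / 2 * h := by convert ht using 2 <;> ring
    linarith
  set J := ∫ x in a..(a + 3 * h), |P.eval x|
  have hJ0 : 0 ≤ J := hJ.trans' (by positivity)
  have hαJ : h * |α| ≤ 13 / 12 * J := by linarith [abs_nonneg U, abs_nonneg W]
  have hβJ : 2 * h ^ 2 * |β| ≤ J := by linarith [abs_nonneg V]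
  have hγJ : h ^ 3 * |γ| ≤ J := by linarith [abs_nonneg U, abs_nonneg W]
  have hhM : h ≤ M / 3 := by linarith
  have hρ0 : 0 ≤ ρ := abs_nonneg _
  rw [show (16 * M / (a + 3 * h - a)) ^ 2 * (1 / (a + 3 * h - a) * J) =
      256 * M ^ 2 * J / (27 * h ^ 3) by field_simp; ring, le_div_iff₀ (by positivity)]
  have hh2 : h ^ 2 ≤ M ^ 2 / 9 := by nlinarith
  have hρh : ρ * h ≤ M ^ 2 / 2 := by nlinarith
  have hρ2 : ρ ^ 2 ≤ 9 / 4 * M ^ 2 := by nlinarith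
  nlinarith [mul_le_mul_of_nonneg_right hαJ (sq_nonneg h),
    mul_le_mul_of_nonneg_right hβJ (mul_nonneg hρ0 hh.le),
    mul_le_mul_of_nonneg_right hγJ (sq_nonneg ρ), mul_le_mul_of_nonneg_left hh2 hJ0,
    mul_le_mul_of_nonneg_left hρh hJ0, mul_le_mul_of_nonneg_left hρ2 hJ0,
    mul_le_mul_of_nonneg_right hPt (by positivity : (0 : ℝ) ≤ h ^ 3)]

theorem abs_sub_midpoint_le_infDist_add {a b : ℝ} (hab : a ≤ b) (t : ℝ) :
    |t - (a + b) / 2| ≤ Metric.infDist t (Set.Icc a b) + (b - a) / 2 := by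
  obtain ⟨y, hy, hty⟩ := isCompact_Icc.exists_infDist_eq_dist (Set.nonempty_Icc.2 hab) t
  rw [hty, Real.dist_eq]
  calc |t - (a + b) / 2| ≤ |t - y| + |y - (a + b) / 2| := abs_sub_le _ _ _
    _ ≤ |t - y| + (b - a) / 2 := by
        gcongr; exact abs_le.2 ⟨by linarith [hy.1], by linarith [hy.2]⟩

/-- Averaged polynomial bound: a polynomial of degree `m` at a point `t` is controlled
by its average absolute value over an interval `I = [a,b]`, up to the factor
`(8 m · max{|I|, dist(t,I)} / |I|)^m`. -/
theorem averaged_polynomial_bound (m : ℕ) (P : Polynomial ℝ) (hdeg : P.natDegree = m)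
    (a b : ℝ) (hab : a < b) (t : ℝ) :
    |P.eval t| ≤
      (8 * m * max (b - a) (Metric.infDist t (Set.Icc a b)) / (b - a)) ^ m *
        ((1 / (b - a)) * ∫ t' in a..b, |P.eval t'|) := by
  set M := max (b - a) (Metric.infDist t (Set.Icc a b))
  have hLM : b - a ≤ M := le_max_left _ _
  have hmid : |t - (a + b) / 2| ≤ M + (b - a) / 2 :=
    (abs_sub_midpoint_le_infDist_add hab.le t).trans (by gcongr; exact le_max_right _ _)
  have hR : ∀ x ∈ Set.Icc a b, |t - x| ≤ 2 * M := fun x hx => by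
    have : |(a + b) / 2 - x| ≤ (b - a) / 2 := abs_le.2 ⟨by linarith [hx.2], by linarith [hx.1]⟩
    linarith [abs_sub_le t ((a + b) / 2) x]
  rcases (by omega : m = 0 ∨ m = 1 ∨ m = 2 ∨ 3 ≤ m) with rfl | rfl | rfl | hm
  · simpa using abs_eval_le_of_forall_abs_sub_le hdeg.le hab hR
  · simpa using abs_eval_le_of_natDegree_le_one hdeg.le hab hLM hmid
  · convert abs_eval_le_of_natDegree_le_two hdeg.le hab hLM hmid using 4
    norm_num
  · refine (abs_eval_le_of_forall_abs_sub_le hdeg.le hab hR).trans ?_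
    have havg : 0 ≤ (1 / (b - a)) * ∫ x in a..b, |P.eval x| := mul_nonneg (by simpa using hab.le)
      (intervalIntegral.integral_nonneg hab.le fun _ _ => abs_nonneg _)
    exact mul_le_mul_of_nonneg_right
      (three_mul_add_one_pow_mul_div_factorial_le hm (by linarith) (by linarith)) havg
end

section
/- Let z₁, …, z_m ∈ ℂ and t ∈ ℝ. Then |(t - z₁)⋯(t - z_m)| ≤ (8 m · max{|t-1|, 2})^m · ∫_{-1}^{1} |(t' - z₁)⋯(t' - z_m)| dt'. -/
/-!
Remove from `[-1, 1]` the `1/(2m)`-neighbourhoods of the real parts of the `zⱼ`; what is left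
has measure at least `1`. At a point `t'` of it every `|t' - zⱼ|` is at least `1/(2m)`, while
`|t - t'| ≤ 2 max{|t - 1|, 2}`, so `|t - zⱼ| ≤ 8m max{|t - 1|, 2} |t' - zⱼ|`. Multiplying over `j`
and integrating over the remaining set gives the bound.
-/

open MeasureTheory Set

lemma norm_sub_le_one_add_div_mul {E : Type*} [SeminormedAddCommGroup E] {x y w : E} {δ : ℝ}
    (hδ : 0 < δ) (hyw : δ ≤ ‖y - w‖) : ‖x - w‖ ≤ (1 + ‖x - y‖ / δ) * ‖y - w‖ := by
  have : ‖x - y‖ ≤ ‖x - y‖ / δ * ‖y - w‖ :=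
    calc ‖x - y‖ = ‖x - y‖ / δ * δ := (div_mul_cancel₀ _ hδ.ne').symm
      _ ≤ _ := by gcongr
  linarith [norm_sub_le_norm_sub_add_norm_sub x y w]

section Products

variable {α ι : Type*} [SeminormedCommRing α] [NormMulClass α] [NormOneClass α]

lemma norm_prod_le_pow_mul_norm_prod (s : Finset ι) {f g : ι → α} {K : ℝ}
    (hfg : ∀ i ∈ s, ‖f i‖ ≤ K * ‖g i‖) : ‖∏ i ∈ s, f i‖ ≤ K ^ s.card * ‖∏ i ∈ s, g i‖ := by
  rw [norm_prod, norm_prod, ← Finset.prod_const, ← Finset.prod_mul_distrib]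
  exact Finset.prod_le_prod (fun i _ => norm_nonneg _) hfg

lemma norm_prod_sub_le_pow_mul_norm_prod_sub (s : Finset ι) {w : ι → α} {x y : α} {δ : ℝ}
    (hδ : 0 < δ) (hyw : ∀ i ∈ s, δ ≤ ‖y - w i‖) :
    ‖∏ i ∈ s, (x - w i)‖ ≤ (1 + ‖x - y‖ / δ) ^ s.card * ‖∏ i ∈ s, (y - w i)‖ :=
  norm_prod_le_pow_mul_norm_prod s fun i hi => norm_sub_le_one_add_div_mul hδ (hyw i hi)

end Products

lemma norm_prod_ofReal_sub_le_pow_mul_norm_prod {ι : Type*} [Fintype ι] (z : ι → ℂ) {t x δ : ℝ}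
    (hδ : 0 < δ) (hx : ∀ i, δ ≤ |x - (z i).re|) :
    ‖∏ i, ((t : ℂ) - z i)‖ ≤ (1 + |t - x| / δ) ^ Fintype.card ι * ‖∏ i, ((x : ℂ) - z i)‖ := by
  have := norm_prod_sub_le_pow_mul_norm_prod_sub (x := (t : ℂ)) Finset.univ hδ fun i _ =>
    (hx i).trans (by simpa using Complex.abs_re_le_norm ((x : ℂ) - z i))
  rwa [← Complex.ofReal_sub, Complex.norm_real, Real.norm_eq_abs, Finset.card_univ] at this

lemma sub_le_volume_real_Icc_sdiff_iUnion_ball {ι : Type*} [Fintype ι] {a b r : ℝ} (hab : a ≤ b)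
    (hr : 0 ≤ r) (c : ι → ℝ) :
    b - a - Fintype.card ι * (2 * r) ≤ volume.real (Icc a b \ ⋃ i, Metric.ball (c i) r) := by
  have hballs : volume (⋃ i, Metric.ball (c i) r) ≠ ⊤ :=
    ((measure_iUnion_fintype_le _ _).trans_lt
      (ENNReal.sum_lt_top.2 fun i _ => measure_ball_lt_top)).ne
  calc b - a - Fintype.card ι * (2 * r)
      ≤ volume.real (Icc a b) - volume.real (⋃ i, Metric.ball (c i) r) := by
        gcongr
        · rw [Real.volume_real_Icc_of_le hab]
        · calc _ ≤ ∑ i, volume.real (Metric.ball (c i) r) := measureReal_iUnion_fintype_le _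
            _ = _ := by simp [Real.volume_real_ball hr]
    _ ≤ _ := le_measureReal_sdiff hballs

lemma mul_volume_real_le_intervalIntegral {f : ℝ → ℝ} {a b c : ℝ} {S : Set ℝ} (hab : a ≤ b)
    (hf : IntegrableOn f (Icc a b)) (hf0 : ∀ x ∈ Icc a b, 0 ≤ f x) (hS : MeasurableSet S)
    (hSab : S ⊆ Icc a b) (hcf : ∀ x ∈ S, c ≤ f x) :
    c * volume.real S ≤ ∫ x in a..b, f x := by
  rw [intervalIntegral.integral_of_le hab, ← integral_Icc_eq_integral_Ioc]
  calc c * volume.real S ≤ ∫ x in S, f x :=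
        setIntegral_ge_of_const_le_real hS (measure_ne_top_of_subset hSab measure_Icc_lt_top.ne)
          hcf (hf.mono_set hSab)
    _ ≤ ∫ x in Icc a b, f x :=
        setIntegral_mono_set hf (ae_restrict_of_forall_mem measurableSet_Icc hf0) hSab.eventuallyLE

lemma one_add_abs_sub_mul_le {m t x : ℝ} (hm : 1 ≤ m) (hx : x ∈ Icc (-1 : ℝ) 1) :
    1 + |t - x| * (2 * m) ≤ 8 * m * max |t - 1| 2 := by
  have h1x : |1 - x| ≤ 2 := abs_le.2 ⟨by linarith [hx.2], by linarith [hx.1]⟩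
  have htx : |t - x| ≤ 2 * max |t - 1| 2 := by
    linarith [abs_sub_le t 1 x, le_max_left |t - 1| 2, le_max_right |t - 1| 2]
  nlinarith [le_max_right |t - 1| 2]

/-- Normalized averaged polynomial bound over `[-1,1]`: for complex roots `z₁,…,z_m` and `t ∈ ℝ`,
`|∏ (t - zⱼ)| ≤ (8 m · max{|t-1|, 2})^m · ∫_{-1}^1 |∏ (t' - zⱼ)| dt'`. -/
theorem averaged_monic_bound (m : ℕ) (z : Fin m → ℂ) (t : ℝ) :
    ‖∏ j, ((t : ℂ) - z j)‖ ≤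
      (8 * m * max |t - 1| 2) ^ m * ∫ t' in (-1 : ℝ)..1, ‖∏ j, ((t' : ℂ) - z j)‖ := by
  rcases Nat.eq_zero_or_pos m with rfl | hm
  · simp
  set C := 8 * m * max |t - 1| 2
  set δ : ℝ := (2 * m)⁻¹ with hδ
  have hδ0 : 0 < δ := by positivity
  set S := Icc (-1 : ℝ) 1 \ ⋃ j, Metric.ball (z j).re δ
  have hS : 1 ≤ volume.real S := by
    have hmδ : (m : ℝ) * (2 * δ) = 1 := by rw [hδ]; field_simp
    simpa [hmδ] using
      sub_le_volume_real_Icc_sdiff_iUnion_ball (by norm_num : (-1 : ℝ) ≤ 1) hδ0.le (z · |>.re)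
  have hP : ∀ x ∈ S, ‖∏ j, ((t : ℂ) - z j)‖ ≤ C ^ m * ‖∏ j, ((x : ℂ) - z j)‖ := by
    rintro x ⟨hx, hx_far⟩
    simp only [mem_iUnion, Metric.mem_ball, Real.dist_eq, not_exists, not_lt] at hx_far
    refine (norm_prod_ofReal_sub_le_pow_mul_norm_prod z hδ0 hx_far).trans ?_
    rw [Fintype.card_fin, hδ, div_inv_eq_mul]
    gcongr
    exact one_add_abs_sub_mul_le (Nat.one_le_cast.2 hm) hx
  calc ‖∏ j, ((t : ℂ) - z j)‖ ≤ ‖∏ j, ((t : ℂ) - z j)‖ * volume.real S :=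
        le_mul_of_one_le_right (norm_nonneg _) hS
    _ ≤ ∫ x in (-1 : ℝ)..1, C ^ m * ‖∏ j, ((x : ℂ) - z j)‖ :=
        mul_volume_real_le_intervalIntegral (by norm_num)
          (by fun_prop : Continuous _).integrableOn_Icc (fun x _ => by positivity)
          (by measurability) sdiff_subset hP
    _ = C ^ m * ∫ x in (-1 : ℝ)..1, ‖∏ j, ((x : ℂ) - z j)‖ :=
        intervalIntegral.integral_const_mul _ _
end

section
/- Let z₁, …, z_k ∈ ℂ with |z_j| ≥ 2 for all j, and let z_{k+1}, …, z_m ∈ ℂ with |z_j| < 2 for all j. Then ∫_{-1}^{1} |(t' - z₁)⋯(t' - z_m)| dt' ≥ (1/2)^k · |z₁|⋯|z_k| · (1/(2(m-k)))^{m-k}. -/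
/-!
For `t ∈ [-1, 1]` each large root satisfies `|t - z| ≥ |z| - 1 ≥ |z| / 2`, and each small root
satisfies `|t - z| ≥ |t - Re z|`. Removing from `(-1, 1]` the intervals of radius
`ε = 1 / (2 (m - k))` around the real parts of the `m - k` small roots leaves a set of measure
at least `2 - 1 = 1`, on which the integrand is at least `(1/2)^k ∏ |z_j| ε^(m-k)`.
-/

open MeasureTheory Set Metric Finset

theorem half_pow_card_mul_prod_norm_le_prod_norm_sub {ι E : Type*} [SeminormedAddCommGroup E]
    (L : Finset ι) (z : ι → E) {w : E} (hw : ‖w‖ ≤ 1) (hz : ∀ j ∈ L, 2 ≤ ‖z j‖) :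
    (1 / 2) ^ #L * ∏ j ∈ L, ‖z j‖ ≤ ∏ j ∈ L, ‖w - z j‖ := by
  rw [← prod_const, ← prod_mul_distrib]
  gcongr with j hj
  have := norm_sub_norm_le (z j) w
  rw [norm_sub_rev] at this
  linarith [hz j hj]

theorem pow_card_le_prod_norm_sub {ι : Type*} (T : Finset ι) (z : ι → ℂ) {t ε : ℝ}
    (hε : 0 ≤ ε) (hfar : ∀ j ∈ T, ε ≤ |t - (z j).re|) :
    ε ^ #T ≤ ∏ j ∈ T, ‖(t : ℂ) - z j‖ := by
  rw [← prod_const]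
  gcongr with j hj
  calc ε ≤ |t - (z j).re| := hfar j hj
    _ = |((t : ℂ) - z j).re| := by simp
    _ ≤ ‖(t : ℂ) - z j‖ := Complex.abs_re_le_norm _

theorem sub_le_volume_real_Ioc_diff_biUnion_closedBall {ι : Type*} (T : Finset ι) (c : ι → ℝ)
    (a b : ℝ) {r : ℝ} (hr : 0 ≤ r) :
    b - a - #T * (2 * r) ≤ volume.real (Ioc a b \ ⋃ i ∈ T, closedBall (c i) r) := by
  set U := ⋃ i ∈ T, closedBall (c i) r
  have hU : volume.real U ≤ #T * (2 * r) :=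
    (measureReal_biUnion_finset_le _ _).trans (by simp [hr])
  have hUfin : volume U ≠ ⊤ :=
    (measure_biUnion_lt_top T.finite_toSet fun _ _ => measure_closedBall_lt_top).ne
  have hcover : volume.real (Ioc a b) ≤ volume.real (Ioc a b \ U) + volume.real U := by
    rw [← measureReal_sdiff_add_inter
      (T.measurableSet_biUnion fun _ _ => measurableSet_closedBall) measure_Ioc_lt_top.ne]
    gcongr
    exact inter_subset_right
  rw [Real.volume_real_Ioc] at hcover
  linarith [le_max_left (b - a) 0]

theorem one_le_volume_real_Ioc_diff_biUnion_closedBall {ι : Type*} (T : Finset ι) (c : ι → ℝ) :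
    1 ≤ volume.real (Ioc (-1) 1 \ ⋃ i ∈ T, closedBall (c i) (1 / (2 * #T))) := by
  have hcover : (#T : ℝ) * (2 * (1 / (2 * #T))) ≤ 1 := by
    rcases eq_or_ne (#T : ℝ) 0 with h | h
    · simp [h]
    · exact (by field_simp : (#T : ℝ) * (2 * (1 / (2 * #T))) = 1).le
  linarith [sub_le_volume_real_Ioc_diff_biUnion_closedBall T c (-1) 1
    (by positivity : (0 : ℝ) ≤ 1 / (2 * #T))]

theorem mul_measureReal_le_setIntegral_of_le_on {α : Type*} [MeasurableSpace α] {μ : Measure α}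
    {f : α → ℝ} {s A : Set α} {c : ℝ} (hA : MeasurableSet A) (hAs : A ⊆ s) (hμA : μ A ≠ ⊤)
    (hf : IntegrableOn f s μ) (hf0 : 0 ≤ᵐ[μ.restrict s] f) (hc : ∀ x ∈ A, c ≤ f x) :
    c * μ.real A ≤ ∫ x in s, f x ∂μ :=
  (setIntegral_ge_of_const_le_real hA hμA hc (hf.mono_set hAs)).trans
    (setIntegral_mono_set hf hf0 (Filter.Eventually.of_forall hAs))

theorem averaged_monic_lower_bound_general (m k : ℕ) (hkm : k ≤ m) (z : Fin m → ℂ)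
    (hlarge : ∀ j : Fin m, (j : ℕ) < k → 2 ≤ ‖z j‖) :
    (1 / 2) ^ k * (∏ j ∈ Finset.univ.filter (fun j : Fin m => (j : ℕ) < k), ‖z j‖) *
        (1 / (2 * (m - k : ℝ))) ^ (m - k) ≤
      ∫ t' in (-1 : ℝ)..1, ‖∏ j, ((t' : ℂ) - z j)‖ := by
  set L := univ.filter (fun j : Fin m => (j : ℕ) < k)
  set T := univ.filter (fun j : Fin m => ¬ (j : ℕ) < k)
  have hL : #L = k := by simp [L, Fin.card_filter_val_lt, hkm]
  have hT : #T = m - k := by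
    simp [T, filter_not, card_sdiff, Fin.card_filter_val_lt, hkm]
  rw [← Nat.cast_sub hkm, ← hT, ← hL]
  set ε : ℝ := 1 / (2 * #T)
  set A := Ioc (-1 : ℝ) 1 \ ⋃ j ∈ T, closedBall (z j).re ε
  have hA : 1 ≤ volume.real A := one_le_volume_real_Ioc_diff_biUnion_closedBall T _
  have hbound : ∀ t ∈ A,
      (1 / 2) ^ #L * (∏ j ∈ L, ‖z j‖) * ε ^ #T ≤ ‖∏ j, ((t : ℂ) - z j)‖ := by
    rintro t ⟨ht, hfar⟩
    simp only [mem_iUnion, mem_closedBall, Real.dist_eq, not_exists, not_le] at hfar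
    rw [norm_prod, ← prod_filter_mul_prod_filter_not univ (fun j : Fin m => (j : ℕ) < k)]
    refine mul_le_mul ?_ (pow_card_le_prod_norm_sub T z (by positivity) fun j hj => (hfar j hj).le)
      (by positivity) (by positivity)
    refine half_pow_card_mul_prod_norm_le_prod_norm_sub L z ?_
      fun j hj => hlarge j (by simpa [L] using hj)
    simpa [abs_le] using ⟨ht.1.le, ht.2⟩
  rw [intervalIntegral.integral_of_le (by norm_num)]
  calc _ ≤ _ * volume.real A := le_mul_of_one_le_right (by positivity) hA
    _ ≤ _ := mul_measureReal_le_setIntegral_of_le_on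
      (measurableSet_Ioc.diff (T.measurableSet_biUnion fun _ _ => measurableSet_closedBall))
      sdiff_subset (measure_ne_top_of_subset sdiff_subset measure_Ioc_lt_top.ne)
      (by fun_prop : Continuous _).integrableOn_Ioc
      (Filter.Eventually.of_forall fun _ => norm_nonneg _) hbound

/-- Lower bound for the average of a monic polynomial over `[-1,1]` in terms of the
product of the moduli of its 'large' roots. The roots `z j` with `j < k` have modulus `≥ 2`
and those with `k ≤ j` have modulus `< 2`. When `k = m` the last factor is `x^0 = 1`. -/
theorem averaged_monic_lower_bound (m k : ℕ) (hkm : k ≤ m) (z : Fin m → ℂ)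
    (hlarge : ∀ j : Fin m, (j : ℕ) < k → 2 ≤ ‖z j‖)
    (hsmall : ∀ j : Fin m, k ≤ (j : ℕ) → ‖z j‖ < 2) :
    (1 / 2) ^ k * (∏ j ∈ Finset.univ.filter (fun j : Fin m => (j : ℕ) < k), ‖z j‖) *
        (1 / (2 * (m - k : ℝ))) ^ (m - k) ≤
      ∫ t' in (-1 : ℝ)..1, ‖∏ j, ((t' : ℂ) - z j)‖ :=
  averaged_monic_lower_bound_general m k hkm z hlarge
end

section
/- Fix n ≥ 2 and define, for integer k with 2 ≤ k ≤ n, f(k) = max{ 2n/((n-1)n + (k-1)k), 1/(n-k+1) }. Then min_{2 ≤ k ≤ n} f(k) ≤ 1/((2-√2)(n-1)). Equivalently, 1 + min_k f(k) ≤ 1 + 1/((2-√2)(n-1)). -/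
/-!
Take `c = √2 - 1` and `k` the integer with `c (n-1) + 1 < k ≤ c (n-1) + 2`.
The upper bound on `k` gives `1/(n-k+1) ≤ 1/((1-c)(n-1))`, and the lower bound gives
`(k-1) k ≥ c² (n-1) n`, hence `2n/((n-1)n + (k-1)k) ≤ 2/((1+c²)(n-1))`.
The two bounds coincide because `c² + 2c - 1 = 0`, i.e. `1 + c² = 2 (1 - c)`.
-/

lemma exists_nat_mem_Ioc_mul_sub_one {c : ℝ} (hc₀ : 0 ≤ c) (hc₁ : c < 1) {n : ℕ}
    (hn : 2 ≤ n) :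
    ∃ k : ℕ, 2 ≤ k ∧ k ≤ n ∧ c * (n - 1) + 1 < k ∧ (k : ℝ) ≤ c * (n - 1) + 2 := by
  have hn₁ : (0 : ℝ) < n - 1 := by
    rw [sub_pos]
    exact_mod_cast hn
  have hx : 0 ≤ c * ((n : ℝ) - 1) := mul_nonneg hc₀ hn₁.le
  have hfloor : ⌊c * ((n : ℝ) - 1)⌋₊ < n - 1 := by
    rw [Nat.floor_lt hx, Nat.cast_sub (by omega), Nat.cast_one]
    nlinarith
  refine ⟨⌊c * ((n : ℝ) - 1)⌋₊ + 2, by omega, by omega, ?_, ?_⟩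
  · push_cast
    linarith [Nat.lt_floor_add_one (c * ((n : ℝ) - 1))]
  · push_cast
    linarith [Nat.floor_le hx]

lemma one_div_sub_add_one_le {n k c : ℝ} (hc : c < 1) (hn : 1 < n) (hk : k ≤ c * (n - 1) + 2) :
    1 / (n - k + 1) ≤ 1 / ((1 - c) * (n - 1)) :=
  one_div_le_one_div_of_le (by nlinarith) (by linarith)

lemma two_mul_div_le {n k c : ℝ} (hc₀ : 0 ≤ c) (hc₁ : c ≤ 1) (hn : 1 < n)
    (hk : c * (n - 1) + 1 < k) :
    2 * n / ((n - 1) * n + (k - 1) * k) ≤ 2 / ((1 + c ^ 2) * (n - 1)) := by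
  have hcn : 0 ≤ c * (n - 1) := mul_nonneg hc₀ (by linarith)
  have hlow : c ^ 2 * ((n - 1) * n) ≤ (k - 1) * k := by
    calc c ^ 2 * ((n - 1) * n) = (c * (n - 1)) * (c * n) := by ring
      _ ≤ (k - 1) * k := mul_le_mul (by linarith) (by nlinarith) (by positivity) (by linarith)
  calc 2 * n / ((n - 1) * n + (k - 1) * k)
      ≤ 2 * n / ((1 + c ^ 2) * (n - 1) * n) :=
        div_le_div_of_nonneg_left (by linarith) (by have := sub_pos.2 hn; positivity) (by linarith)
    _ = 2 / ((1 + c ^ 2) * (n - 1)) := by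
        rw [mul_comm 2 n, mul_comm _ n, mul_div_mul_left _ _ (by linarith)]

lemma one_add_sqrt_two_sub_one_sq : 1 + (√2 - 1) ^ 2 = 2 * (2 - √2) := by
  nlinarith [Real.sq_sqrt (show (0 : ℝ) ≤ 2 by norm_num)]

/-- The range of exponents of the main theorem contains the range
`p ≥ 1 + (1/(2-√2))·(1/(n-1))`: the minimum over `2 ≤ k ≤ n` of
`max{2n/((n-1)n + (k-1)k), 1/(n-k+1)}` is at most `1/((2-√2)(n-1))`. -/
theorem exponent_numerology (n : ℕ) (hn : 2 ≤ n) :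
    ∃ k : ℕ, 2 ≤ k ∧ k ≤ n ∧
      max ((2 * n) / (((n : ℝ) - 1) * n + ((k : ℝ) - 1) * k)) (1 / ((n : ℝ) - k + 1)) ≤
        1 / ((2 - Real.sqrt 2) * ((n : ℝ) - 1)) := by
  have hsqrt_lt_two : √2 < 2 := by
    nlinarith [Real.sq_sqrt (show (0 : ℝ) ≤ 2 by norm_num), Real.sqrt_nonneg 2]
  obtain ⟨k, hk₂, hkn, hk_low, hk_high⟩ := exists_nat_mem_Ioc_mul_sub_one (c := √2 - 1)
    (by linarith [Real.one_lt_sqrt_two]) (by linarith) hn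
  have hn₁ : (1 : ℝ) < n := by exact_mod_cast hn
  refine ⟨k, hk₂, hkn, max_le ?_ ?_⟩
  · calc 2 * (n : ℝ) / ((n - 1) * n + (k - 1) * k)
        ≤ 2 / ((1 + (√2 - 1) ^ 2) * (n - 1)) :=
          two_mul_div_le (by linarith [Real.one_lt_sqrt_two]) (by linarith) hn₁ hk_low
      _ = 1 / ((2 - √2) * (n - 1)) := by
        rw [one_add_sqrt_two_sub_one_sq, mul_assoc, ← div_div, div_self two_ne_zero]
  · have h := one_div_sub_add_one_le (c := √2 - 1) (by linarith) hn₁ hk_high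
    rwa [show 1 - (√2 - 1) = 2 - √2 by ring] at h
end

section
/- Let 2 ≤ m ≤ n and define γ_j = (m-1)m/((j-1)j(j+1)) for m ≤ j ≤ n-1 and γ_n = 1 − ∑_{j=m}^{n-1} γ_j. Then for every i with m+1 ≤ i ≤ n, one has ∑_{j=m}^{i-1} (2i − j − 1)·γ_j = i − m. -/
/-!
With `γ_j = (m-1)m/((j-1)j(j+1))`, the partial sums telescope:
`∑_{j=m}^{i-1} γ_j = 1/2 - (m-1)m/(2(i-1)i)`. Hence passing from `i` to `i+1` adds
`2 ∑_{j=m}^{i-1} γ_j + (i+1) γ_i = 1` to the left-hand side, which vanishes at `i = m`.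
-/

open Finset

noncomputable def gammaWeight (m j : ℕ) : ℝ :=
  ((m : ℝ) - 1) * m / (((j : ℝ) - 1) * j * ((j : ℝ) + 1))

noncomputable def gammaPartialSum (m i : ℕ) : ℝ :=
  1 / 2 - ((m : ℝ) - 1) * m / (2 * ((i : ℝ) - 1) * i)

lemma gammaWeight_eq_sub {m j : ℕ} (hj : 2 ≤ j) :
    gammaWeight m j = gammaPartialSum m (j + 1) - gammaPartialSum m j := by
  have hj' : (2 : ℝ) ≤ j := by exact_mod_cast hj
  have h₁ : (j : ℝ) - 1 ≠ 0 := by linarith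
  have h₂ : (j : ℝ) ≠ 0 := by linarith
  have h₃ : (j : ℝ) + 1 ≠ 0 := by linarith
  simp only [gammaWeight, gammaPartialSum, Nat.cast_succ, add_sub_cancel_right]
  field_simp
  ring

lemma gammaPartialSum_self {m : ℕ} (hm : 2 ≤ m) : gammaPartialSum m m = 0 := by
  have hm' : (2 : ℝ) ≤ m := by exact_mod_cast hm
  have h₁ : (m : ℝ) - 1 ≠ 0 := by linarith
  have h₂ : (m : ℝ) ≠ 0 := by linarith
  simp only [gammaPartialSum]
  field_simp
  ring

lemma sum_Ico_gammaWeight {m i : ℕ} (hm : 2 ≤ m) (hi : m ≤ i) :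
    ∑ j ∈ Ico m i, gammaWeight m j = gammaPartialSum m i := by
  calc ∑ j ∈ Ico m i, gammaWeight m j
      = ∑ j ∈ Ico m i, (gammaPartialSum m (j + 1) - gammaPartialSum m j) :=
        sum_congr rfl fun j hj => gammaWeight_eq_sub (hm.trans (mem_Ico.1 hj).1)
    _ = gammaPartialSum m i := by
        rw [sum_Ico_sub (gammaPartialSum m) hi, gammaPartialSum_self hm, sub_zero]

lemma two_mul_gammaPartialSum_add {m i : ℕ} (hi : 2 ≤ i) :
    2 * gammaPartialSum m i + (i + 1) * gammaWeight m i = 1 := by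
  have hi' : (2 : ℝ) ≤ i := by exact_mod_cast hi
  have h₁ : (i : ℝ) - 1 ≠ 0 := by linarith
  have h₂ : (i : ℝ) ≠ 0 := by linarith
  have h₃ : (i : ℝ) + 1 ≠ 0 := by linarith
  simp only [gammaWeight, gammaPartialSum]
  field_simp
  ring

theorem sum_Ico_mul_gammaWeight {m i : ℕ} (hm : 2 ≤ m) (hi : m ≤ i) :
    ∑ j ∈ Ico m i, (2 * (i : ℝ) - j - 1) * gammaWeight m j = i - m := by
  induction i, hi using Nat.le_induction with
  | base => simp
  | succ i hi ih =>
    have hsplit : ∑ j ∈ Ico m i, (2 * ((i + 1 : ℕ) : ℝ) - j - 1) * gammaWeight m j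
        = ∑ j ∈ Ico m i, (2 * (i : ℝ) - j - 1) * gammaWeight m j
          + 2 * ∑ j ∈ Ico m i, gammaWeight m j := by
      rw [mul_sum, ← sum_add_distrib]
      exact sum_congr rfl fun j _ => by push_cast; ring
    have hstep := two_mul_gammaPartialSum_add (m := m) (hm.trans hi)
    rw [sum_Ico_succ_top hi, hsplit, ih, sum_Ico_gammaWeight hm hi]
    push_cast
    linarith

theorem gamma_linear_system_general (m n : ℕ) (hm : 2 ≤ m) :
    ∀ i : ℕ, m + 1 ≤ i → i ≤ n →
      ∑ j ∈ Finset.Ico m i,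
          (2 * (i : ℝ) - (j : ℝ) - 1) *
            (((m : ℝ) - 1) * m / (((j : ℝ) - 1) * j * ((j : ℝ) + 1))) =
        (i : ℝ) - m := by
  intro i hi _
  exact sum_Ico_mul_gammaWeight hm (Nat.le_of_succ_le hi)

/-- The explicit weights `γ_j = (m-1)m/((j-1)j(j+1))` solve the linear system
`∑_{j=m}^{i-1} (2i − j − 1)·γ_j = i − m` for every `m+1 ≤ i ≤ n`. -/
theorem gamma_linear_system (m n : ℕ) (hm : 2 ≤ m) (hmn : m ≤ n) :
    ∀ i : ℕ, m + 1 ≤ i → i ≤ n →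
      ∑ j ∈ Finset.Ico m i,
          (2 * (i : ℝ) - (j : ℝ) - 1) *
            (((m : ℝ) - 1) * m / (((j : ℝ) - 1) * j * ((j : ℝ) + 1))) =
        (i : ℝ) - m :=
  gamma_linear_system_general m n hm
end
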